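/- arXiv:math/0507483 — 4 statements merged into one kernel-verified Lean document; each statement's English description precedes it below -/
import Mathlib

section
/- Let m ≥ 1 and let q₀, q₁, p₀, p₁ ∈ ℝ^m. Set a = (q₀, p₀), b = (q₁, p₁), c = (q₀, p₁) in ℝ^m × ℝ^m. For each ordered pair (u, v) of points, parametrize the straight segment from u to v by γ(t) = (1−t)u + tv, t ∈ [0,1], and define its action by ∫₀¹ ½⟨γ(t), J γ′(t)⟩ dt. Then the sum of the actions of the three segments a→b, b→c, c→a (the boundary of the triangle with these vertices, traversed in this order) equals ½⟨q₁ − q₀, p₁ − p₀⟩. -/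
noncomputable section

open scoped RealInnerProductSpace

/-- `ℝ^m` with the Euclidean inner product. -/
abbrev V (m : ℕ) : Type := EuclideanSpace ℝ (Fin m)

/-- Phase space `ℝ^m × ℝ^m ≅ ℝ^(2m)`, with the Euclidean (`L²`) inner product. -/
abbrev Phase (m : ℕ) : Type := WithLp 2 (V m × V m)

/-- The identification `Phase m ≃ ℝ^m × ℝ^m`. -/
def e (m : ℕ) : Phase m ≃L[ℝ] V m × V m := WithLp.prodContinuousLinearEquiv 2 ℝ (V m) (V m)

/-- The point `z = (q, p)` of phase space. -/
def pt {m : ℕ} (q p : V m) : Phase m := (e m).symm (q, p)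

/-- The position (`q`) part of a phase-space point. -/
def qpart {m : ℕ} (z : Phase m) : V m := ((e m) z).1

/-- The momentum (`p`) part of a phase-space point. -/
def ppart {m : ℕ} (z : Phase m) : V m := ((e m) z).2

/-- The standard symplectic matrix `J`, acting by `J (q, p) = (p, -q)`. -/
def Jmap {m : ℕ} : Phase m →L[ℝ] Phase m :=
  ((e m).symm : V m × V m →L[ℝ] Phase m).comp
    (((ContinuousLinearMap.snd ℝ (V m) (V m)).prod
      (-(ContinuousLinearMap.fst ℝ (V m) (V m)))).comp ((e m) : Phase m →L[ℝ] V m × V m))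

/-- The Hessian of `H` at `z`, viewed as a linear map: the derivative of the gradient. -/
def hess {m : ℕ} (H : Phase m → ℝ) (z : Phase m) : Phase m →L[ℝ] Phase m :=
  fderiv ℝ (gradient H) z

/-- `ψ_H(z) = ⟨J ∇H(z), (Hess H(z)) (J ∇H(z))⟩`. -/
def psi {m : ℕ} (H : Phase m → ℝ) (z : Phase m) : ℝ :=
  ⟪Jmap (gradient H z), hess H z (Jmap (gradient H z))⟫

/-- The action `∫₀¹ ½⟨γ(t), J γ'(t)⟩ dt` of the straight segment
`γ(t) = (1-t)•u + t•v`, `t ∈ [0,1]`, from `u` to `v` (so `γ'(t) = v - u`). -/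
def segAction {m : ℕ} (u v : Phase m) : ℝ :=
  ∫ t in (0:ℝ)..1, (1 / 2 : ℝ) * ⟪(1 - t) • u + t • v, Jmap (v - u)⟫

/-! Since `J` is skew-adjoint, the action density along the segment from `u` to `v` is the
constant `½⟨u, J v⟩`, so the boundary action is `½(ω(a,b) + ω(b,c) + ω(c,a))` with
`ω(z, z') = ⟨z, J z'⟩ = ⟨q, p'⟩ - ⟨p, q'⟩`, and the coordinates of `a, b, c` do the rest. -/

lemma inner_Jmap_comm {m : ℕ} (z z' : Phase m) : ⟪z, Jmap z'⟫ = -⟪z', Jmap z⟫ := by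
  simp only [Jmap, e, WithLp.prod_inner_apply]
  simp [real_inner_comm]

lemma inner_Jmap_self {m : ℕ} (z : Phase m) : ⟪z, Jmap z⟫ = 0 := by
  linarith [inner_Jmap_comm z z]

lemma inner_pt_Jmap_pt {m : ℕ} (q p q' p' : V m) :
    ⟪pt q p, Jmap (pt q' p')⟫ = ⟪q, p'⟫ - ⟪p, q'⟫ := by
  simp [Jmap, pt, e, WithLp.prod_inner_apply, sub_eq_add_neg]

lemma segAction_eq {m : ℕ} (u v : Phase m) : segAction u v = (1 / 2 : ℝ) * ⟪u, Jmap v⟫ := by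
  have integrand_const (t : ℝ) : ⟪(1 - t) • u + t • v, Jmap (v - u)⟫ = ⟪u, Jmap v⟫ := by
    rw [map_sub, inner_sub_right, inner_add_left, inner_add_left, real_inner_smul_left,
      real_inner_smul_left, real_inner_smul_left, real_inner_smul_left, inner_Jmap_self,
      inner_Jmap_self, inner_Jmap_comm v u]
    ring
  simp only [segAction, integrand_const, intervalIntegral.integral_const]
  norm_num

theorem action_of_triangle_boundary_general (m : ℕ) (q₀ q₁ p₀ p₁ : V m)
    (a b c : Phase m) (ha : a = pt q₀ p₀) (hb : b = pt q₁ p₁) (hc : c = pt q₀ p₁) :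
    segAction a b + segAction b c + segAction c a
      = (1 / 2 : ℝ) * ⟪q₁ - q₀, p₁ - p₀⟫ := by
  subst ha hb hc
  simp only [segAction_eq, inner_pt_Jmap_pt, inner_sub_left, inner_sub_right,
    real_inner_comm p₀ q₀, real_inner_comm p₀ q₁, real_inner_comm p₁ q₀, real_inner_comm p₁ q₁]
  ring

/-- The sum of the actions of the three straight segments
`a → b`, `b → c`, `c → a`, where `a = (q₀, p₀)`, `b = (q₁, p₁)`, `c = (q₀, p₁)`,
equals `½⟨q₁ - q₀, p₁ - p₀⟩`. -/
theorem action_of_triangle_boundary (m : ℕ) (hm : 1 ≤ m) (q₀ q₁ p₀ p₁ : V m)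
    (a b c : Phase m) (ha : a = pt q₀ p₀) (hb : b = pt q₁ p₁) (hc : c = pt q₀ p₁) :
    segAction a b + segAction b c + segAction c a
      = (1 / 2 : ℝ) * ⟪q₁ - q₀, p₁ - p₀⟫ :=
  action_of_triangle_boundary_general m q₀ q₁ p₀ p₁ a b c ha hb hc
end
end

section
/- Let m ≥ 1, let 𝓗 : ℝ^m × ℝ^m → ℝ be three times continuously differentiable, and define ψ(z) = ⟨J∇𝓗(z), (Hess 𝓗(z))(J∇𝓗(z))⟩. Let c ∈ ℝ, let U ⊆ ℝ^m × ℝ^m be open, and let p₀ : U → ℝ^m, q₁ : U → ℝ^m, λ : U → ℝ, μ : U → ℝ be differentiable functions such that for every (q, P) ∈ U, writing z₀ = (q, p₀(q,P)), z₁ = (q₁(q,P), P), z̄ = (z₀ + z₁)/2: (i) z₁ − z₀ = λ(q,P) J∇𝓗(z̄) + μ(q,P) J∇ψ(z̄); (ii) 𝓗(z̄) = 0; (iii) μ(q,P)·(ψ(z̄) − c) = 0; and (iv) μ(q,P) and ψ(z̄) − c are not both zero. Define S : U → ℝ by S(q,P) = ⟨q, P⟩ + ½⟨q₁(q,P) −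 q, P − p₀(q,P)⟩ + λ(q,P) 𝓗(z̄) + μ(q,P)(ψ(z̄) − c). Then for every (q,P) ∈ U, the partial gradient of S with respect to q equals p₀(q,P), and the partial gradient of S with respect to P equals q₁(q,P). -/
noncomputable section

open scoped RealInnerProductSpace

/-! On `U` the constraint terms of `S` vanish identically, so near each point `S` agrees with
`⟨q, P⟩ + ½⟨q₁ - q, P - p₀⟩`, whose differential is `⟨p₀, dq⟩ + ⟨q₁, dP⟩ + ⟨J(z₁ - z₀), dz̄⟩`.
By the step equation `J(z₁ - z₀) = -λ ∇𝓗(z̄) - μ ∇ψ(z̄)`. The first term is orthogonal to `dz̄`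
because `𝓗 ∘ z̄ ≡ 0`; the second because where `μ ≠ 0`, an open condition, complementary
slackness forces `ψ ∘ z̄ ≡ c`. -/

open scoped Topology

section Calculus

variable {E F : Type*} [NormedAddCommGroup E] [NormedSpace ℝ E]
  [NormedAddCommGroup F] [InnerProductSpace ℝ F] [CompleteSpace F]

theorem inner_gradient_fderiv_eq_zero_of_eventually_const {f : F → ℝ} {g : E → F}
    {g' : E →L[ℝ] F} {x : E} (hf : DifferentiableAt ℝ f (g x)) (hg : HasFDerivAt g g' x)
    (hc : ∀ᶠ y in 𝓝 x, f (g y) = f (g x)) (u : E) :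
    ⟪gradient f (g x), g' u⟫ = 0 := by
  have hchain := hf.hasGradientAt.hasFDerivAt.comp x hg
  have hconst : HasFDerivAt (f ∘ g) (0 : E →L[ℝ] ℝ) x :=
    (hasFDerivAt_const _ x).congr_of_eventuallyEq hc
  simpa using congrArg (· u) (hchain.unique hconst)

theorem mul_inner_gradient_fderiv_eq_zero_of_eventually_mul_sub {f : F → ℝ} {g : E → F}
    {g' : E →L[ℝ] F} {μ : E → ℝ} {c : ℝ} {x : E} (hf : DifferentiableAt ℝ f (g x))
    (hg : HasFDerivAt g g' x) (hμ : ContinuousAt μ x)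
    (hc : ∀ᶠ y in 𝓝 x, μ y * (f (g y) - c) = 0) (u : E) :
    μ x * ⟪gradient f (g x), g' u⟫ = 0 := by
  rcases eq_or_ne (μ x) 0 with h0 | h0
  · rw [h0, zero_mul]
  have hfc : ∀ᶠ y in 𝓝 x, f (g y) = c := by
    filter_upwards [hc, hμ.eventually_ne h0] with y hy hμy
    exact sub_eq_zero.mp ((mul_eq_zero.mp hy).resolve_left hμy)
  rw [inner_gradient_fderiv_eq_zero_of_eventually_const hf hg
    (by filter_upwards [hfc] with y hy; rw [hy, hfc.self_of_nhds]) u, mul_zero]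

theorem gradient_partial_eq_of_hasFDerivAt_coprod {S : F × F → ℝ} {x : F × F} {a b : F}
    (h : HasFDerivAt S ((InnerProductSpace.toDual ℝ F a).coprod
      (InnerProductSpace.toDual ℝ F b) : F × F →L[ℝ] ℝ) x) :
    gradient (fun q => S (q, x.2)) x.1 = a ∧ gradient (fun p => S (x.1, p)) x.2 = b := by
  obtain ⟨q, p⟩ := x
  refine ⟨HasGradientAt.gradient ?_, HasGradientAt.gradient ?_⟩
  · exact (h.comp q (hasFDerivAt_prodMk_left (𝕜 := ℝ) q p)).congr_fderiv
      (ContinuousLinearMap.coprod_comp_inl _ _)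
  · exact (h.comp p (hasFDerivAt_prodMk_right (𝕜 := ℝ) q p)).congr_fderiv
      (ContinuousLinearMap.coprod_comp_inr _ _)

theorem contDiff_gradient {n : WithTop ℕ∞} {H : F → ℝ} (h : ContDiff ℝ (n + 1) H) :
    ContDiff ℝ n (gradient H) :=
  (InnerProductSpace.toDual ℝ F).symm.contDiff.comp (h.fderiv_right le_rfl)

end Calculus

theorem contDiff_psi {m : ℕ} {n : WithTop ℕ∞} {H : Phase m → ℝ} (h : ContDiff ℝ (n + 2) H) :
    ContDiff ℝ n (psi H) := by
  have hg : ContDiff ℝ (n + 1) (gradient H) :=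
    contDiff_gradient (by rwa [add_assoc, one_add_one_eq_two])
  have hJg : ContDiff ℝ n fun z => Jmap (gradient H z) :=
    Jmap.contDiff.comp (hg.of_le le_self_add)
  exact hJg.inner ℝ ((hg.fderiv_right le_rfl).clm_apply hJg)

section PhaseSpace

variable {m : ℕ}

theorem Jmap_Jmap (z : Phase m) : Jmap (Jmap z) = -z := by
  apply (e m).injective
  simp [Jmap, Prod.ext_iff]

theorem Jmap_pt (a b : V m) : Jmap (pt a b) = pt b (-a) := by
  simp [Jmap, pt]

theorem inner_pt (a b c d : V m) : ⟪pt a b, pt c d⟫ = ⟪a, c⟫ + ⟪b, d⟫ := by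
  simp [pt, e, WithLp.prod_inner_apply]

theorem pt_sub (a b c d : V m) : pt a b - pt c d = pt (a - c) (b - d) := by
  simp [pt, ← map_sub]

def midpointDeriv (A B : V m × V m →L[ℝ] V m) : V m × V m →L[ℝ] Phase m :=
  (2:ℝ)⁻¹ • ((e m).symm : V m × V m →L[ℝ] Phase m).comp
    ((ContinuousLinearMap.fst ℝ (V m) (V m)).prod B
      + A.prod (ContinuousLinearMap.snd ℝ (V m) (V m)))

theorem midpointDeriv_apply (A B : V m × V m →L[ℝ] V m) (u : V m × V m) :
    midpointDeriv A B u = pt ((2:ℝ)⁻¹ • (u.1 + A u)) ((2:ℝ)⁻¹ • (B u + u.2)) := by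
  simp only [midpointDeriv, pt, smul_apply, ContinuousLinearMap.comp_apply,
    add_apply, ContinuousLinearMap.prod_apply, ContinuousLinearEquiv.coe_coe,
    ContinuousLinearMap.coe_fst', ContinuousLinearMap.coe_snd', ← map_smul, Prod.smul_mk,
    Prod.mk_add_mk, smul_add]

variable {q₁ p₀ : V m × V m → V m} {A B : V m × V m →L[ℝ] V m} {x : V m × V m}

theorem hasFDerivAt_midpoint (hq : HasFDerivAt q₁ A x) (hp : HasFDerivAt p₀ B x) :
    HasFDerivAt (fun y => (2:ℝ)⁻¹ • (pt y.1 (p₀ y) + pt (q₁ y) y.2)) (midpointDeriv A B) x :=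
  ((((e m).symm : V m × V m →L[ℝ] Phase m).hasFDerivAt.comp x
      ((hasFDerivAt_fst.prodMk hp).add (hq.prodMk hasFDerivAt_snd))).const_smul (2:ℝ)⁻¹)

theorem hasFDerivAt_reducedGeneratingFunction (hq : HasFDerivAt q₁ A x)
    (hp : HasFDerivAt p₀ B x) :
    HasFDerivAt (fun y : V m × V m => ⟪y.1, y.2⟫ + (1 / 2 : ℝ) * ⟪q₁ y - y.1, y.2 - p₀ y⟫)
      ((InnerProductSpace.toDual ℝ (V m) (p₀ x)).coprod (InnerProductSpace.toDual ℝ (V m) (q₁ x))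
        + (InnerProductSpace.toDual ℝ (Phase m) (Jmap (pt (q₁ x) x.2 - pt x.1 (p₀ x)))).comp
          (midpointDeriv A B)) x := by
  refine ((hasFDerivAt_fst.inner ℝ hasFDerivAt_snd).add
    (((hq.sub hasFDerivAt_fst).inner ℝ (hasFDerivAt_snd.sub hp)).const_mul (1 / 2 : ℝ)))
    |>.congr_fderiv (ContinuousLinearMap.ext fun u => ?_)
  simp only [add_apply, smul_apply, ContinuousLinearMap.comp_apply, ContinuousLinearMap.prod_apply,
    sub_apply, Pi.sub_apply, ContinuousLinearMap.coe_fst', ContinuousLinearMap.coe_snd',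
    fderivInnerCLM_apply, smul_eq_mul, ContinuousLinearMap.coprod_apply,
    InnerProductSpace.toDual_apply_apply, midpointDeriv_apply, pt_sub, Jmap_pt, inner_pt]
  simp only [inner_sub_left, inner_sub_right, inner_add_right, inner_neg_left,
    real_inner_smul_right]
  linarith [real_inner_comm u.1 x.2, real_inner_comm (A u) x.2,
      real_inner_comm (A u) (p₀ x), real_inner_comm u.1 (p₀ x)]

end PhaseSpace

theorem dth_generating_function_general (m : ℕ)
    (𝓗 : Phase m → ℝ) (h𝓗 : ContDiff ℝ 3 𝓗) (c : ℝ)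
    (U : Set (V m × V m)) (hU : IsOpen U)
    (p₀ q₁ : V m × V m → V m) (lam mu : V m × V m → ℝ)
    (hp₀ : DifferentiableOn ℝ p₀ U) (hq₁ : DifferentiableOn ℝ q₁ U)
    (hmu : DifferentiableOn ℝ mu U)
    (z₀ z₁ zbar : V m × V m → Phase m)
    (hz₀ : ∀ x : V m × V m, z₀ x = pt x.1 (p₀ x))
    (hz₁ : ∀ x : V m × V m, z₁ x = pt (q₁ x) x.2)
    (hzbar : ∀ x : V m × V m, zbar x = (2:ℝ)⁻¹ • (z₀ x + z₁ x))
    (hstep : ∀ x ∈ U, z₁ x - z₀ x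
      = lam x • Jmap (gradient 𝓗 (zbar x)) + mu x • Jmap (gradient (psi 𝓗) (zbar x)))
    (hcon : ∀ x ∈ U, 𝓗 (zbar x) = 0)
    (hcomp : ∀ x ∈ U, mu x * (psi 𝓗 (zbar x) - c) = 0)
    (S : V m × V m → ℝ)
    (hS : ∀ x : V m × V m,
      S x = ⟪x.1, x.2⟫ + (1 / 2 : ℝ) * ⟪q₁ x - x.1, x.2 - p₀ x⟫
        + lam x * 𝓗 (zbar x) + mu x * (psi 𝓗 (zbar x) - c)) :
    ∀ x ∈ U,
      gradient (fun q : V m => S (q, x.2)) x.1 = p₀ x ∧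
      gradient (fun P : V m => S (x.1, P)) x.2 = q₁ x := by
  intro x hx
  have hUx : U ∈ 𝓝 x := hU.mem_nhds hx
  have hq := (hq₁.differentiableAt hUx).hasFDerivAt
  have hp := (hp₀.differentiableAt hUx).hasFDerivAt
  set D := midpointDeriv (fderiv ℝ q₁ x) (fderiv ℝ p₀ x)
  have hzbar_deriv : HasFDerivAt zbar D x := by
    convert hasFDerivAt_midpoint hq hp using 2 with y
    rw [hzbar, hz₀, hz₁]
  have h𝓗_flat (u) : ⟪gradient 𝓗 (zbar x), D u⟫ = 0 :=
    inner_gradient_fderiv_eq_zero_of_eventually_const (h𝓗.differentiable (by norm_num) _)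
      hzbar_deriv (by filter_upwards [hUx] with y hy; rw [hcon y hy, hcon x hx]) u
  have hψ_flat (u) : mu x * ⟪gradient (psi 𝓗) (zbar x), D u⟫ = 0 :=
    mul_inner_gradient_fderiv_eq_zero_of_eventually_mul_sub
      ((contDiff_psi (n := 1) h𝓗).differentiable one_ne_zero _) hzbar_deriv
      (hmu.differentiableAt hUx).continuousAt (Filter.eventually_of_mem hUx hcomp) u
  have hω : (InnerProductSpace.toDual ℝ (Phase m) (Jmap (z₁ x - z₀ x))).comp D = 0 := by
    refine ContinuousLinearMap.ext fun u => ?_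
    rw [ContinuousLinearMap.comp_apply, InnerProductSpace.toDual_apply_apply, hstep x hx,
      map_add, map_smul, map_smul, Jmap_Jmap, Jmap_Jmap, inner_add_left, real_inner_smul_left,
      real_inner_smul_left, inner_neg_left, inner_neg_left, h𝓗_flat, zero_apply]
    linarith [hψ_flat u]
  have hS_reduced : S =ᶠ[𝓝 x] fun y => ⟪y.1, y.2⟫ + (1 / 2 : ℝ) * ⟪q₁ y - y.1, y.2 - p₀ y⟫ := by
    filter_upwards [hUx] with y hy
    rw [hS y, hcon y hy, hcomp y hy, mul_zero, add_zero, add_zero]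
  apply gradient_partial_eq_of_hasFDerivAt_coprod
  have := (hasFDerivAt_reducedGeneratingFunction hq hp).congr_of_eventuallyEq hS_reduced
  rwa [← hz₀, ← hz₁, hω, add_zero] at this

/-- generating function of the regularized DTH step.
If on an open set `U` of points `(q, P)` the functions `p₀, q₁, λ, μ` are
differentiable and satisfy the regularized DTH step equations (with `μ` and
`ψ(z̄) - c` never simultaneously zero), then the generating function
`S(q,P) = ⟨q,P⟩ + ½⟨q₁ - q, P - p₀⟩ + λ𝓗(z̄) + μ(ψ(z̄) - c)` satisfies
`S_q = p₀` and `S_P = q₁` (partial gradients). -/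
theorem dth_generating_function (m : ℕ) (hm : 1 ≤ m)
    (𝓗 : Phase m → ℝ) (h𝓗 : ContDiff ℝ 3 𝓗) (c : ℝ)
    (U : Set (V m × V m)) (hU : IsOpen U)
    (p₀ q₁ : V m × V m → V m) (lam mu : V m × V m → ℝ)
    (hp₀ : DifferentiableOn ℝ p₀ U) (hq₁ : DifferentiableOn ℝ q₁ U)
    (hlam : DifferentiableOn ℝ lam U) (hmu : DifferentiableOn ℝ mu U)
    (z₀ z₁ zbar : V m × V m → Phase m)
    (hz₀ : ∀ x : V m × V m, z₀ x = pt x.1 (p₀ x))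
    (hz₁ : ∀ x : V m × V m, z₁ x = pt (q₁ x) x.2)
    (hzbar : ∀ x : V m × V m, zbar x = (2:ℝ)⁻¹ • (z₀ x + z₁ x))
    (hstep : ∀ x ∈ U, z₁ x - z₀ x
      = lam x • Jmap (gradient 𝓗 (zbar x)) + mu x • Jmap (gradient (psi 𝓗) (zbar x)))
    (hcon : ∀ x ∈ U, 𝓗 (zbar x) = 0)
    (hcomp : ∀ x ∈ U, mu x * (psi 𝓗 (zbar x) - c) = 0)
    (hnondeg : ∀ x ∈ U, ¬(mu x = 0 ∧ psi 𝓗 (zbar x) - c = 0))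
    (S : V m × V m → ℝ)
    (hS : ∀ x : V m × V m,
      S x = ⟪x.1, x.2⟫ + (1 / 2 : ℝ) * ⟪q₁ x - x.1, x.2 - p₀ x⟫
        + lam x * 𝓗 (zbar x) + mu x * (psi 𝓗 (zbar x) - c)) :
    ∀ x ∈ U,
      gradient (fun q : V m => S (q, x.2)) x.1 = p₀ x ∧
      gradient (fun P : V m => S (x.1, P)) x.2 = q₁ x :=
  dth_generating_function_general m 𝓗 h𝓗 c U hU p₀ q₁ lam mu hp₀ hq₁ hmu z₀ z₁ zbar hz₀ hz₁ hzbar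
    hstep hcon hcomp S hS
end
end

section
/- Let m ≥ 1 and d = 2m. Let A be a symmetric d × d real matrix, b ∈ ℝ^d, c ∈ ℝ, and define the quadratic function L(z) = ½⟨z, Az⟩ + ⟨b, z⟩ + c. Let H : ℝ^d → ℝ be three times continuously differentiable and define ψ(z) = ⟨J∇H(z), (Hess H(z))(J∇H(z))⟩. If the Poisson bracket [L, H](z) = ⟨∇L(z), J∇H(z)⟩ vanishes for all z ∈ ℝ^d, then the Poisson bracket [L, ψ](z) = ⟨∇L(z), J∇ψ(z)⟩ also vanishes for all z ∈ ℝ^d. -/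
noncomputable section

open scoped RealInnerProductSpace

/-! `[L, H] = 0` says that `H` is a first integral of the Hamiltonian field `X = J∇L`, which is
affine with linear part `K = JA`. Differentiating `dH · X = 0` once gives `Hess H · X = AJ∇H`, so
the derivative of `u = J∇H` along `X` is `Ku`; differentiating twice gives
`D³H(u, u, X) = -2 D²H(u, Ku)`. Writing `ψ = D²H(u, u)`, its derivative along `X` is
`D³H(X, u, u) + 2 D²H(u, Ku)`, which vanishes because `D³H` is symmetric. -/

def IsFirstIntegral {E : Type*} [NormedAddCommGroup E] [NormedSpace ℝ E] (H : E → ℝ)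
    (X : E → E) : Prop :=
  ∀ y, fderiv ℝ H y (X y) = 0

section NormedSpace

variable {E F G : Type*} [NormedAddCommGroup E] [NormedSpace ℝ E]
  [NormedAddCommGroup F] [NormedSpace ℝ F] [NormedAddCommGroup G] [NormedSpace ℝ G]

theorem fderiv_apply_apply {Φ : E → F →L[ℝ] F →L[ℝ] G} {z : E} (hΦ : DifferentiableAt ℝ Φ z)
    (a : E) (v w : F) : fderiv ℝ (fun y => Φ y v w) z a = fderiv ℝ Φ z a v w := by
  have hv : DifferentiableAt ℝ (fun y => Φ y v) z := hΦ.clm_apply (differentiableAt_const v)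
  rw [fderiv_clm_apply hv (differentiableAt_const w),
    fderiv_clm_apply hΦ (differentiableAt_const v)]
  simp

theorem fderiv_apply_self_apply_self {Φ : E → F →L[ℝ] F →L[ℝ] G} {u : E → F} {z : E}
    (hΦ : DifferentiableAt ℝ Φ z) (hu : DifferentiableAt ℝ u z) (a : E) :
    fderiv ℝ (fun y => Φ y (u y) (u y)) z a =
      fderiv ℝ Φ z a (u z) (u z) + Φ z (fderiv ℝ u z a) (u z) + Φ z (u z) (fderiv ℝ u z a) := by
  rw [fderiv_clm_apply (hΦ.clm_apply hu) hu, fderiv_clm_apply hΦ hu]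
  simp only [add_apply, ContinuousLinearMap.comp_apply, ContinuousLinearMap.flip_apply]
  abel

theorem hasFDerivAt_apply_add_const (J A : E →L[ℝ] E) (b y : E) :
    HasFDerivAt (fun y => J (A y + b)) (J ∘L A) y :=
  J.hasFDerivAt.comp y (A.hasFDerivAt.add_const b)

variable {H : E → ℝ}

theorem differentiable_fderiv_fderiv (hH : ContDiff ℝ 3 H) :
    Differentiable ℝ (fderiv ℝ (fderiv ℝ H)) :=
  ((hH.fderiv_right (m := 2) le_rfl).fderiv_right (m := 1) le_rfl).differentiable one_ne_zero

theorem fderiv_fderiv_fderiv_comm_left (hH : ContDiff ℝ 3 H) (z a v w : E) :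
    fderiv ℝ (fderiv ℝ (fderiv ℝ H)) z a v w = fderiv ℝ (fderiv ℝ (fderiv ℝ H)) z v a w := by
  rw [(hH.fderiv_right (m := 2) le_rfl).contDiffAt.isSymmSndFDerivAt (by norm_num) a v]

theorem fderiv_fderiv_fderiv_comm_right (hH : ContDiff ℝ 3 H) (z a v w : E) :
    fderiv ℝ (fderiv ℝ (fderiv ℝ H)) z a v w = fderiv ℝ (fderiv ℝ (fderiv ℝ H)) z a w v := by
  have hsymm : (fun y => fderiv ℝ (fderiv ℝ H) y v w) = fun y => fderiv ℝ (fderiv ℝ H) y w v :=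
    funext fun y => hH.contDiffAt.isSymmSndFDerivAt (by norm_num) v w
  rw [← fderiv_apply_apply (differentiable_fderiv_fderiv hH z), hsymm,
    fderiv_apply_apply (differentiable_fderiv_fderiv hH z)]

namespace IsFirstIntegral

variable {X : E → E} {K : E →L[ℝ] E}

theorem fderiv_fderiv_apply_add (h : IsFirstIntegral H X) (hH : ContDiff ℝ 2 H)
    (hX : ∀ y, HasFDerivAt X K y) (y v : E) :
    fderiv ℝ (fderiv ℝ H) y v (X y) + fderiv ℝ H y (K v) = 0 := by
  have hD : Differentiable ℝ (fderiv ℝ H) := (hH.fderiv_right le_rfl).differentiable one_ne_zero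
  have h' := congrArg (fun f => fderiv ℝ f y v) (funext h)
  simp only [fderiv_clm_apply (hD y) (hX y).differentiableAt, (hX y).fderiv,
    fderiv_fun_const] at h'
  simpa [add_comm] using h'

theorem fderiv_fderiv_fderiv_apply_add (h : IsFirstIntegral H X) (hH : ContDiff ℝ 3 H)
    (hX : ∀ y, HasFDerivAt X K y) (y v w : E) :
    fderiv ℝ (fderiv ℝ (fderiv ℝ H)) y w v (X y) + fderiv ℝ (fderiv ℝ H) y v (K w)
      + fderiv ℝ (fderiv ℝ H) y w (K v) = 0 := by
  have hD : Differentiable ℝ (fderiv ℝ H) :=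
    (hH.fderiv_right (m := 2) le_rfl).differentiable two_ne_zero
  have hD2 := differentiable_fderiv_fderiv hH
  have hD2v : Differentiable ℝ (fun y => fderiv ℝ (fderiv ℝ H) y v) :=
    fun y => (hD2 y).clm_apply (differentiableAt_const v)
  have h' := congrArg (fun f => fderiv ℝ f y w)
    (funext fun x => h.fderiv_fderiv_apply_add (hH.of_le (by norm_num)) hX x v)
  rw [fderiv_fun_add ((hD2v y).clm_apply (hX y).differentiableAt)
      ((hD y).clm_apply (differentiableAt_const _)),
    fderiv_clm_apply (hD2v y) (hX y).differentiableAt,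
    fderiv_clm_apply (hD y) (differentiableAt_const _),
    fderiv_clm_apply (hD2 y) (differentiableAt_const v), (hX y).fderiv] at h'
  simpa [add_comm] using h'

end IsFirstIntegral

end NormedSpace

section InnerProductSpace

variable {E : Type*} [NormedAddCommGroup E] [InnerProductSpace ℝ E] [CompleteSpace E] {H : E → ℝ}

theorem differentiableAt_gradient {z : E} (hH : DifferentiableAt ℝ (fderiv ℝ H) z) :
    DifferentiableAt ℝ (gradient H) z :=
  (((InnerProductSpace.toDual ℝ E).symm.contDiff (n := 1)).differentiable one_ne_zero _).comp z hH

theorem inner_fderiv_gradient {z : E} (hH : DifferentiableAt ℝ (fderiv ℝ H) z) (v w : E) :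
    ⟪fderiv ℝ (gradient H) z v, w⟫ = fderiv ℝ (fderiv ℝ H) z v w := by
  have h := fderiv_inner_apply ℝ (differentiableAt_gradient hH) (differentiableAt_const w) v
  simp only [funext fun y => inner_gradient_left (f := H) (x := y) (y := w), fderiv_fun_const,
    fderiv_clm_apply hH (differentiableAt_const w)] at h
  simpa using h.symm

theorem hasGradientAt_quadratic {A : E →L[ℝ] E} (hA : ∀ v w, ⟪A v, w⟫ = ⟪v, A w⟫) (b : E)
    (c : ℝ) (z : E) :
    HasGradientAt (fun y => (1 / 2 : ℝ) * ⟪y, A y⟫ + ⟪b, y⟫ + c) (A z + b) z := by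
  rw [hasGradientAt_iff_hasFDerivAt]
  refine (((((hasFDerivAt_id z).inner ℝ A.hasFDerivAt).const_mul (1 / 2 : ℝ)).add
    ((innerSL ℝ b).hasFDerivAt (x := z))).add_const c).congr_fderiv ?_
  ext v
  simp [hA z v]
  rw [real_inner_comm (A z) v, hA z v]
  ring

namespace IsFirstIntegral

variable {J A : E →L[ℝ] E} {b : E}

theorem fderiv_gradient_apply (h : IsFirstIntegral H fun y => J (A y + b))
    (hJ : ∀ v w, ⟪J v, w⟫ = -⟪v, J w⟫) (hA : ∀ v w, ⟪A v, w⟫ = ⟪v, A w⟫)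
    (hH : ContDiff ℝ 2 H) (z : E) :
    fderiv ℝ (gradient H) z (J (A z + b)) = A (J (gradient H z)) := by
  have hD : DifferentiableAt ℝ (fderiv ℝ H) z :=
    (hH.fderiv_right le_rfl).differentiable one_ne_zero z
  refine ext_inner_right ℝ fun w => ?_
  calc ⟪fderiv ℝ (gradient H) z (J (A z + b)), w⟫
      = fderiv ℝ (fderiv ℝ H) z w (J (A z + b)) := by
        rw [inner_fderiv_gradient hD, hH.contDiffAt.isSymmSndFDerivAt (by norm_num)]
    _ = -⟪gradient H z, J (A w)⟫ := by
        rw [inner_gradient_left, eq_neg_iff_add_eq_zero]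
        exact h.fderiv_fderiv_apply_add hH (hasFDerivAt_apply_add_const J A b) z w
    _ = ⟪A (J (gradient H z)), w⟫ := by
        rw [hA, hJ]

theorem hessian_quadratic_form (h : IsFirstIntegral H fun y => J (A y + b))
    (hJ : ∀ v w, ⟪J v, w⟫ = -⟪v, J w⟫) (hA : ∀ v w, ⟪A v, w⟫ = ⟪v, A w⟫)
    (hH : ContDiff ℝ 3 H) :
    IsFirstIntegral
      (fun y => ⟪J (gradient H y), fderiv ℝ (gradient H) y (J (gradient H y))⟫)
      fun y => J (A y + b) := by
  intro z
  have hD : Differentiable ℝ (fderiv ℝ H) :=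
    (hH.fderiv_right (m := 2) le_rfl).differentiable two_ne_zero
  have hψ : (fun y => ⟪J (gradient H y), fderiv ℝ (gradient H) y (J (gradient H y))⟫) =
      fun y => fderiv ℝ (fderiv ℝ H) y (J (gradient H y)) (J (gradient H y)) :=
    funext fun y => by rw [real_inner_comm, inner_fderiv_gradient (hD y)]
  have hu : HasFDerivAt (fun y => J (gradient H y)) (J ∘L fderiv ℝ (gradient H) z) z :=
    J.hasFDerivAt.comp z (differentiableAt_gradient (hD z)).hasFDerivAt
  rw [hψ, fderiv_apply_self_apply_self (differentiable_fderiv_fderiv hH z) hu.differentiableAt,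
    hu.fderiv, ContinuousLinearMap.comp_apply,
    h.fderiv_gradient_apply hJ hA (hH.of_le (by norm_num)) z,
    fderiv_fderiv_fderiv_comm_left hH, fderiv_fderiv_fderiv_comm_right hH,
    hH.contDiffAt.isSymmSndFDerivAt (by norm_num) (J (A _))]
  simpa only [ContinuousLinearMap.comp_apply] using
    h.fderiv_fderiv_fderiv_apply_add hH (hasFDerivAt_apply_add_const J A b) z (J (gradient H z)) (J (gradient H z))

end IsFirstIntegral

end InnerProductSpace

theorem inner_Jmap_left {m : ℕ} (v w : Phase m) : ⟪Jmap v, w⟫ = -⟪v, Jmap w⟫ := by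
  change ⟪v.snd, w.fst⟫ + ⟪-v.fst, w.snd⟫ = -(⟪v.fst, w.snd⟫ + ⟪v.snd, -w.fst⟫)
  simp only [inner_neg_left, inner_neg_right]
  ring

theorem inner_gradient_Jmap_gradient {m : ℕ} (F G : Phase m → ℝ) (z : Phase m) :
    ⟪gradient F z, Jmap (gradient G z)⟫ = -fderiv ℝ G z (Jmap (gradient F z)) := by
  rw [← inner_gradient_left, real_inner_comm (Jmap (gradient F z)), inner_Jmap_left, neg_neg]

theorem bracket_with_psi_vanishes_general (m : ℕ)
    (A : Phase m →L[ℝ] Phase m) (hA : ∀ v w : Phase m, ⟪A v, w⟫ = ⟪v, A w⟫)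
    (b : Phase m) (c : ℝ) (L : Phase m → ℝ)
    (hL : ∀ z : Phase m, L z = (1 / 2 : ℝ) * ⟪z, A z⟫ + ⟪b, z⟫ + c)
    (H : Phase m → ℝ) (hH : ContDiff ℝ 3 H)
    (hbracket : ∀ z : Phase m, ⟪gradient L z, Jmap (gradient H z)⟫ = 0) :
    ∀ z : Phase m, ⟪gradient L z, Jmap (gradient (psi H) z)⟫ = 0 := by
  have hgradL : ∀ y, gradient L y = A y + b := fun y => by
    rw [funext hL]
    exact (hasGradientAt_quadratic hA b c y).gradient
  have hfirst : IsFirstIntegral H fun y => Jmap (A y + b) := fun y => by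
    have h := hbracket y
    rwa [inner_gradient_Jmap_gradient, hgradL, neg_eq_zero] at h
  intro z
  rw [inner_gradient_Jmap_gradient, hgradL, neg_eq_zero]
  exact hfirst.hessian_quadratic_form inner_Jmap_left hA hH z

/-- `[L, H] ≡ 0` implies `[L, ψ] ≡ 0` for quadratic `L`.
If `L(z) = ½⟨z, Az⟩ + ⟨b, z⟩ + c` is quadratic (`A` symmetric) and the Poisson
bracket `[L, H](z) = ⟨∇L(z), J∇H(z)⟩` vanishes identically, then the Poisson
bracket `[L, ψ](z) = ⟨∇L(z), J∇ψ(z)⟩` vanishes identically as well. -/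
theorem bracket_with_psi_vanishes (m : ℕ) (hm : 1 ≤ m)
    (A : Phase m →L[ℝ] Phase m) (hA : ∀ v w : Phase m, ⟪A v, w⟫ = ⟪v, A w⟫)
    (b : Phase m) (c : ℝ) (L : Phase m → ℝ)
    (hL : ∀ z : Phase m, L z = (1 / 2 : ℝ) * ⟪z, A z⟫ + ⟪b, z⟫ + c)
    (H : Phase m → ℝ) (hH : ContDiff ℝ 3 H)
    (hbracket : ∀ z : Phase m, ⟪gradient L z, Jmap (gradient H z)⟫ = 0) :
    ∀ z : Phase m, ⟪gradient L z, Jmap (gradient (psi H) z)⟫ = 0 :=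
  bracket_with_psi_vanishes_general m A hA b c L hL H hH hbracket
end
end

section
/- Let m ≥ 1 and d = 2m, let T be a d × d real symplectic matrix (i.e., Tᵀ J T = J), and let H : ℝ^d → ℝ be twice continuously differentiable. Define K : ℝ^d → ℝ by K(Z) = H(TZ), and define ψ_H(z) = ⟨J∇H(z), (Hess H(z))(J∇H(z))⟩ and ψ_K(Z) = ⟨J∇K(Z), (Hess K(Z))(J∇K(Z))⟩. Then ψ_K(Z) = ψ_H(TZ) for all Z ∈ ℝ^d. -/
noncomputable section

open scoped RealInnerProductSpace

/-! Since `T` is linear, `∇K = Tᵀ (∇H ∘ T)` and `Hess K(Z) = Tᵀ Hess H(TZ) T`. Moving the outer `Tᵀ`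
across the inner product gives `ψ_K(Z) = ⟨T J Tᵀ g, Hess H(TZ) (T J Tᵀ g)⟩` with `g = ∇H(TZ)`,
and `T J Tᵀ = J` for a symplectic `T`. -/

open ContinuousLinearMap

section InnerProductSpace

variable {E F : Type*} [NormedAddCommGroup E] [InnerProductSpace ℝ E] [CompleteSpace E]
  [NormedAddCommGroup F] [InnerProductSpace ℝ F] [CompleteSpace F]

theorem ContDiff.gradient {f : E → ℝ} {n k : WithTop ℕ∞} (hf : ContDiff ℝ n f) (hkn : k + 1 ≤ n) :
    ContDiff ℝ k (gradient f) :=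
  (InnerProductSpace.toDual ℝ E).symm.toContinuousLinearEquiv.contDiff.comp (hf.fderiv_right hkn)

theorem HasGradientAt.comp_continuousLinearMap {f : F → ℝ} {g : F} {x : E} (T : E →L[ℝ] F)
    (hf : HasGradientAt f g (T x)) : HasGradientAt (fun y => f (T y)) (adjoint T g) x := by
  rw [hasGradientAt_iff_hasFDerivAt] at hf ⊢
  refine (hf.comp x T.hasFDerivAt).congr_fderiv ?_
  ext v
  simp [adjoint_inner_left]

theorem gradient_comp_continuousLinearMap {f : F → ℝ} (hf : Differentiable ℝ f) (T : E →L[ℝ] F) :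
    gradient (fun y => f (T y)) = fun x => adjoint T (gradient f (T x)) :=
  gradient_eq fun x => (hf (T x)).hasGradientAt.comp_continuousLinearMap T

theorem fderiv_gradient_comp_continuousLinearMap {f : F → ℝ} (hf : Differentiable ℝ f)
    (T : E →L[ℝ] F) {x : E} (hgrad : DifferentiableAt ℝ (gradient f) (T x)) :
    fderiv ℝ (gradient fun y => f (T y)) x = adjoint T ∘L fderiv ℝ (gradient f) (T x) ∘L T := by
  rw [gradient_comp_continuousLinearMap hf]
  exact ((adjoint T).hasFDerivAt.comp (T x) hgrad.hasFDerivAt |>.comp x T.hasFDerivAt).fderiv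

theorem adjoint_mul_mul_eq_of_inner {J T : E →L[ℝ] E}
    (hT : ∀ v w : E, ⟪T v, J (T w)⟫ = ⟪v, J w⟫) : adjoint T * J * T = J := by
  ext w
  refine ext_inner_left ℝ fun v => ?_
  simpa [adjoint_inner_right] using hT v w

/-- `Tᵀ J T = J` and `J² = -1` make `-J Tᵀ` a left inverse of `J T`; in finite dimension it is
also a right inverse, which rearranges to `T J Tᵀ = J`. -/
theorem mul_mul_adjoint_eq_of_adjoint_mul_mul_eq [FiniteDimensional ℝ E] {J T : E →L[ℝ] E}
    (hJ : J * J = -1) (hT : adjoint T * J * T = J) : T * J * adjoint T = J := by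
  have hleft : -(J * adjoint T) * (J * T) = 1 := by
    rw [neg_mul, mul_assoc, ← mul_assoc (adjoint T), hT, hJ, neg_neg]
  have hright : J * T * -(J * adjoint T) = 1 := by
    rw [← coe_inj] at hleft ⊢
    exact mul_eq_one_comm.mp hleft
  calc T * J * adjoint T = -(J * J) * (T * J * adjoint T) := by rw [hJ, neg_neg, one_mul]
    _ = J * (J * T * -(J * adjoint T)) := by noncomm_ring
    _ = J := by rw [hright, mul_one]

end InnerProductSpace

theorem Jmap_mul_Jmap {m : ℕ} : (Jmap : Phase m →L[ℝ] Phase m) * Jmap = -1 := by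
  ext z : 1
  simp [Jmap, ← Prod.neg_mk]

theorem psi_symplectic_invariance_general (m : ℕ)
    (T : Phase m →L[ℝ] Phase m)
    (hT : ∀ v w : Phase m, ⟪T v, Jmap (T w)⟫ = ⟪v, Jmap w⟫)
    (H : Phase m → ℝ) (hH : ContDiff ℝ 2 H)
    (K : Phase m → ℝ) (hK : ∀ Z : Phase m, K Z = H (T Z)) :
    ∀ Z : Phase m, psi K Z = psi H (T Z) := by
  intro Z
  obtain rfl : K = fun Z => H (T Z) := funext hK
  have hHd : Differentiable ℝ H := hH.differentiable (by norm_num)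
  have hgrad : DifferentiableAt ℝ (gradient H) (T Z) :=
    (hH.gradient (k := 1) (by norm_num)).differentiable one_ne_zero (T Z)
  have hTJT : T (Jmap (adjoint T (gradient H (T Z)))) = Jmap (gradient H (T Z)) :=
    congrArg (· (gradient H (T Z)))
      (mul_mul_adjoint_eq_of_adjoint_mul_mul_eq Jmap_mul_Jmap (adjoint_mul_mul_eq_of_inner hT))
  rw [psi, psi, hess, hess, fderiv_gradient_comp_continuousLinearMap hHd T hgrad,
    gradient_comp_continuousLinearMap hHd]
  simp only [coe_comp, Function.comp_apply, adjoint_inner_right, hTJT]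

/-- invariance of `ψ` under linear symplectic transformations.
If `T` is a linear symplectic transformation (`Tᵀ J T = J`, i.e.
`⟨Tv, J(Tw)⟩ = ⟨v, Jw⟩` for all `v, w`) and `K(Z) = H(TZ)`,
then `ψ_K(Z) = ψ_H(TZ)` for all `Z`. -/
theorem psi_symplectic_invariance (m : ℕ) (hm : 1 ≤ m)
    (T : Phase m →L[ℝ] Phase m)
    (hT : ∀ v w : Phase m, ⟪T v, Jmap (T w)⟫ = ⟪v, Jmap w⟫)
    (H : Phase m → ℝ) (hH : ContDiff ℝ 2 H)
    (K : Phase m → ℝ) (hK : ∀ Z : Phase m, K Z = H (T Z)) :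
    ∀ Z : Phase m, psi K Z = psi H (T Z) :=
  psi_symplectic_invariance_general m T hT H hH K hK
end
end
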